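/- arXiv:1507.06869 — 3 statements merged into one kernel-verified Lean document; each statement's English description precedes it below -/
import Mathlib

section
/- Let G be a finite group, let 𝓕 be a family of subgroups of G, and let 𝓐 ⊆ 𝓕 be a collection of subgroups of G that is closed under conjugation and under intersection of pairs of its members, and such that every subgroup belonging to 𝓕 is contained in some member of 𝓐. Then the inclusion functor O_𝓐(G) ⥤ O_𝓕(G) of orbit categories is final (in Mathlib: CategoryTheory.Functor.Final), i.e., for every H ∈ 𝓕 the comma category of objects of O_𝓐(G) equipped with a G-map from G/H is connected, and colimits indexed by O_𝓕(G) may be computed after restriction to O_𝓐(G). -/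
open CategoryTheory

universe u

variable (G : Type u) [Group G]

/-- The orbit category `O_S(G)` attached to a collection `S` of subgroups of `G`:
objects are the subgroups `H ∈ S` (thought of as the coset `G`-sets `G/H` with the
translation action), and morphisms are the `G`-equivariant maps `G/H → G/K`. -/
structure OrbitCat (S : Set (Subgroup G)) where
  /-- The subgroup `H`, representing the `G`-set `G/H`. -/
  pt : Subgroup G
  mem : pt ∈ S

instance {S : Set (Subgroup G)} : Category (OrbitCat G S) where
  Hom A B := { f : G ⧸ A.pt → G ⧸ B.pt // ∀ (g : G) (x : G ⧸ A.pt), f (g • x) = g • f x }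
  id A := ⟨id, fun _ _ => rfl⟩
  comp f g := ⟨g.1 ∘ f.1, fun a x => by simp [Function.comp, f.2, g.2]⟩

/-- The inclusion functor `O_S(G) ⥤ O_T(G)` for `S ⊆ T`. -/
def orbitIncl {S T : Set (Subgroup G)} (h : S ⊆ T) : OrbitCat G S ⥤ OrbitCat G T where
  obj A := ⟨A.pt, h A.mem⟩
  map f := f

/-!
A `G`-map out of `G/H` is determined by the image `x` of the base coset, and any `x` whose
stabilizer contains `H` occurs. Hence, for `H ∈ 𝓕`, two objects `G/H → G/K₁`, `G/H → G/K₂`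
of the comma category are determined by points `x₁`, `x₂` whose stabilizers contain `H`.
These stabilizers are conjugates of `K₁`, `K₂`, so `L = Stab x₁ ⊓ Stab x₂` lies in `𝓐`, and
`G/H → G/L` maps to both objects, which are therefore connected. Nonemptiness is the
hypothesis that `H` lies below a member of `𝓐`.
-/

theorem CategoryTheory.isConnected_of_exists_common_source {J : Type*} [Category J] [Nonempty J]
    (h : ∀ j₁ j₂ : J, ∃ j₀, Nonempty (j₀ ⟶ j₁) ∧ Nonempty (j₀ ⟶ j₂)) : IsConnected J :=
  zigzag_isConnected fun j₁ j₂ => by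
    obtain ⟨_, ⟨f₁⟩, ⟨f₂⟩⟩ := h j₁ j₂
    exact Zigzag.of_inv_hom f₁ f₂

namespace OrbitCat

open MulAction QuotientGroup

variable {G} {S : Set (Subgroup G)}

theorem stabilizer_mem (hS : ∀ K ∈ S, ∀ g : G, K.map (MulAut.conj g).toMonoidHom ∈ S)
    (A : OrbitCat G S) (x : G ⧸ A.pt) : stabilizer G x ∈ S := by
  induction x using QuotientGroup.induction_on with
  | H g =>
    have hx : (g : G ⧸ A.pt) = g • ((1 : G) : G ⧸ A.pt) := by simp
    rw [hx, stabilizer_smul_eq_stabilizer_map_conj, stabilizer_quotient]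
    exact hS _ A.mem g

/-- The `G`-map `G/A → G/B`, `gA ↦ g • x`. -/
def homOfLEStabilizer {A B : OrbitCat G S} (x : G ⧸ B.pt) (h : A.pt ≤ stabilizer G x) :
    A ⟶ B :=
  ⟨ofQuotientStabilizer G x ∘ Subgroup.quotientMapOfLE h, fun a y => by
    induction y using QuotientGroup.induction_on with
    | H g => exact mul_smul a g x⟩

theorem homOfLEStabilizer_apply_one {A B : OrbitCat G S} (x : G ⧸ B.pt)
    (h : A.pt ≤ stabilizer G x) : (homOfLEStabilizer x h).1 ((1 : G) : G ⧸ A.pt) = x :=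
  one_smul G x

def homOfLE {A B : OrbitCat G S} (h : A.pt ≤ B.pt) : A ⟶ B :=
  homOfLEStabilizer ((1 : G) : G ⧸ B.pt) (by rwa [stabilizer_quotient])

theorem homOfLE_apply_one {A B : OrbitCat G S} (h : A.pt ≤ B.pt) :
    (homOfLE h).1 ((1 : G) : G ⧸ A.pt) = ((1 : G) : G ⧸ B.pt) :=
  homOfLEStabilizer_apply_one _ _

theorem le_stabilizer_apply_one {A B : OrbitCat G S} (f : A ⟶ B) :
    A.pt ≤ stabilizer G (f.1 ((1 : G) : G ⧸ A.pt)) := fun a ha => by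
  have hfix : a • ((1 : G) : G ⧸ A.pt) = (1 : G) := by
    rwa [← mem_stabilizer_iff, stabilizer_quotient]
  rw [mem_stabilizer_iff, ← f.2, hfix]

theorem hom_ext {A B : OrbitCat G S} {f f' : A ⟶ B}
    (h : f.1 ((1 : G) : G ⧸ A.pt) = f'.1 ((1 : G) : G ⧸ A.pt)) : f = f' := by
  refine Subtype.ext (funext fun y => ?_)
  induction y using QuotientGroup.induction_on with
  | H g =>
    have hy : (g : G ⧸ A.pt) = g • ((1 : G) : G ⧸ A.pt) := by simp
    rw [hy, f.2, f'.2, h]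

theorem nonempty_structuredArrow_hom {T : Set (Subgroup G)} (hST : S ⊆ T) {H : OrbitCat G T}
    (j : StructuredArrow H (orbitIncl G hST)) (L : OrbitCat G S) (hHL : H.pt ≤ L.pt)
    (hL : L.pt ≤ stabilizer G (j.hom.1 ((1 : G) : G ⧸ H.pt))) :
    Nonempty (StructuredArrow.mk (homOfLE hHL : H ⟶ (orbitIncl G hST).obj L) ⟶ j) :=
  ⟨StructuredArrow.homMk (homOfLEStabilizer _ hL) <| hom_ext <|
    (congrArg (homOfLEStabilizer _ hL).1
      (homOfLE_apply_one (B := (orbitIncl G hST).obj L) hHL)).trans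
      (homOfLEStabilizer_apply_one _ hL)⟩

end OrbitCat

theorem orbitIncl_final_general {G : Type u} [Group G]
    (𝓕 : Set (Subgroup G))
    (𝓐 : Set (Subgroup G)) (h𝓐𝓕 : 𝓐 ⊆ 𝓕)
    (h𝓐conj : ∀ K ∈ 𝓐, ∀ g : G, K.map (MulAut.conj g).toMonoidHom ∈ 𝓐)
    (h𝓐inf : ∀ K ∈ 𝓐, ∀ K' ∈ 𝓐, K ⊓ K' ∈ 𝓐)
    (h𝓐cof : ∀ H ∈ 𝓕, ∃ K ∈ 𝓐, H ≤ K) :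
    (orbitIncl G h𝓐𝓕).Final := by
  refine ⟨fun H => ?_⟩
  obtain ⟨K, hK, hHK⟩ := h𝓐cof H.pt H.mem
  have : Nonempty (StructuredArrow H (orbitIncl G h𝓐𝓕)) :=
    ⟨.mk (OrbitCat.homOfLE (B := (orbitIncl G h𝓐𝓕).obj ⟨K, hK⟩) hHK)⟩
  refine isConnected_of_exists_common_source fun j₁ j₂ => ?_
  let x₁ := j₁.hom.1 ((1 : G) : G ⧸ H.pt)
  let x₂ := j₂.hom.1 ((1 : G) : G ⧸ H.pt)
  let L : OrbitCat G 𝓐 := ⟨MulAction.stabilizer G x₁ ⊓ MulAction.stabilizer G x₂,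
    h𝓐inf _ (OrbitCat.stabilizer_mem h𝓐conj j₁.right x₁) _
      (OrbitCat.stabilizer_mem h𝓐conj j₂.right x₂)⟩
  have hHL : H.pt ≤ L.pt :=
    le_inf (OrbitCat.le_stabilizer_apply_one j₁.hom) (OrbitCat.le_stabilizer_apply_one j₂.hom)
  exact ⟨_, OrbitCat.nonempty_structuredArrow_hom h𝓐𝓕 j₁ L hHL inf_le_left,
    OrbitCat.nonempty_structuredArrow_hom h𝓐𝓕 j₂ L hHL inf_le_right⟩

/-- **Proposition `furthercofinalcollection` (Section 5.5).**
Let `G` be a finite group, `𝓕` a family of subgroups of `G` (nonempty, closed under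
conjugation and under passage to subgroups), and `𝓐 ⊆ 𝓕` a collection of subgroups
closed under conjugation and under pairwise intersection, such that every subgroup
in `𝓕` is contained in some member of `𝓐`.  Then the inclusion functor
`O_𝓐(G) ⥤ O_𝓕(G)` of orbit categories is final. -/
theorem orbitIncl_final {G : Type u} [Group G] [Finite G]
    (𝓕 : Set (Subgroup G)) (h𝓕ne : 𝓕.Nonempty)
    (h𝓕conj : ∀ H ∈ 𝓕, ∀ g : G, H.map (MulAut.conj g).toMonoidHom ∈ 𝓕)
    (h𝓕sub : ∀ H ∈ 𝓕, ∀ K : Subgroup G, K ≤ H → K ∈ 𝓕)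
    (𝓐 : Set (Subgroup G)) (h𝓐𝓕 : 𝓐 ⊆ 𝓕)
    (h𝓐conj : ∀ K ∈ 𝓐, ∀ g : G, K.map (MulAut.conj g).toMonoidHom ∈ 𝓐)
    (h𝓐inf : ∀ K ∈ 𝓐, ∀ K' ∈ 𝓐, K ⊓ K' ∈ 𝓐)
    (h𝓐cof : ∀ H ∈ 𝓕, ∃ K ∈ 𝓐, H ≤ K) :
    (orbitIncl G h𝓐𝓕).Final :=
  orbitIncl_final_general 𝓕 𝓐 h𝓐𝓕 h𝓐conj h𝓐inf h𝓐cof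
end

section
/- Let G be a finite group and let 𝓐 be a collection of subgroups of G that is closed under conjugation and under intersection of pairs of its members. Let H ≤ G be a subgroup that is contained in at least one member of 𝓐, and let K₀ denote the intersection of all members of 𝓐 containing H; then K₀ ∈ 𝓐 and H ≤ K₀. Then the under category of O_𝓐(G) under G/H (the comma category whose objects are G-maps G/H → G/K with K ∈ 𝓐) has an initial object, given by the canonical projection G/H → G/K₀. -/
open CategoryTheory

universe u

variable (G : Type u) [Group G]

/-- The canonical `G`-equivariant projection `G/H → G/K` for `H ≤ K`. -/
def orbitProj {H K : Subgroup G} (h : H ≤ K) :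
    { f : G ⧸ H → G ⧸ K // ∀ (g : G) (x : G ⧸ H), f (g • x) = g • f x } :=
  ⟨Quotient.map' id (fun a b hab => by
      rw [QuotientGroup.leftRel_apply] at hab ⊢
      exact h hab),
   fun g x => Quotient.inductionOn' x (fun a => rfl)⟩

lemma orbit_formula {G : Type u} [Group G] {A B : Subgroup G}
    (f : { f : G ⧸ A → G ⧸ B // ∀ (g : G) (x : G ⧸ A), f (g • x) = g • f x })
    (a : G) (ha : f.1 (QuotientGroup.mk 1) = QuotientGroup.mk a) (g : G) :
    f.1 (QuotientGroup.mk g) = QuotientGroup.mk (g * a) := by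
  have h1 : (QuotientGroup.mk g : G ⧸ A) = g • QuotientGroup.mk 1 :=
    congrArg QuotientGroup.mk (mul_one g).symm
  rw [h1, f.2, ha]
  rfl

lemma orbit_le_conj {G : Type u} [Group G] {A B : Subgroup G}
    (f : { f : G ⧸ A → G ⧸ B // ∀ (g : G) (x : G ⧸ A), f (g • x) = g • f x })
    (a : G) (ha : f.1 (QuotientGroup.mk 1) = QuotientGroup.mk a) :
    A ≤ B.map (MulAut.conj a).toMonoidHom := by
  intro h hh
  rw [Subgroup.mem_map_equiv]
  have e1 : (QuotientGroup.mk h : G ⧸ A) = QuotientGroup.mk 1 := by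
    rw [QuotientGroup.eq]
    simpa using inv_mem hh
  have e2 := orbit_formula f a ha h
  rw [e1, ha] at e2
  have := (QuotientGroup.eq (s := B)).mp e2
  simpa [MulAut.conj_symm_apply, mul_assoc] using this

/-- Translation map `G/K₀ → G/B`, `gK₀ ↦ gaB`, valid when `K₀ ≤ aBa⁻¹`. -/
def transMap {G : Type u} [Group G] {K₀ B : Subgroup G} (a : G)
    (h : K₀ ≤ B.map (MulAut.conj a).toMonoidHom) :
    { f : G ⧸ K₀ → G ⧸ B // ∀ (g : G) (x : G ⧸ K₀), f (g • x) = g • f x } :=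
  ⟨Quotient.map' (fun g => g * a) (fun g g' hgg' => by
      rw [QuotientGroup.leftRel_apply] at hgg' ⊢
      have := h hgg'
      rw [Subgroup.mem_map_equiv] at this
      simpa [MulAut.conj_symm_apply, mul_assoc, mul_inv_rev] using this),
   fun g x => Quotient.inductionOn' x (fun b => congrArg QuotientGroup.mk (mul_assoc g b a))⟩

/-- **Key step in the proof of Proposition `furthercofinalcollection` (Section 5.5).**
Let `G` be a finite group and `𝓐` a collection of subgroups of `G` closed under
conjugation and under pairwise intersection.  Let `H ≤ G` be contained in at least
one member of `𝓐` and let `K₀` be the intersection of all members of `𝓐`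
containing `H`.  Then `K₀ ∈ 𝓐`, `H ≤ K₀`, and the under category of `O_𝓐(G)`
under `G/H` (the comma category of `G`-maps `G/H → G/K` with `K ∈ 𝓐`) has an
initial object, given by the canonical projection `G/H → G/K₀`. -/
theorem underCategory_hasInitial {G : Type u} [Group G] [Finite G]
    (𝓐 : Set (Subgroup G))
    (h𝓐conj : ∀ K ∈ 𝓐, ∀ g : G, K.map (MulAut.conj g).toMonoidHom ∈ 𝓐)
    (h𝓐inf : ∀ K ∈ 𝓐, ∀ K' ∈ 𝓐, K ⊓ K' ∈ 𝓐)
    (H : Subgroup G) (hH : ∃ K ∈ 𝓐, H ≤ K)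
    (K₀ : Subgroup G) (hK₀ : K₀ = sInf {K : Subgroup G | K ∈ 𝓐 ∧ H ≤ K}) :
    ∃ (h₁ : K₀ ∈ 𝓐) (h₂ : H ≤ K₀),
      Nonempty (Limits.IsInitial
        (StructuredArrow.mk
          (show (⟨H, Set.mem_univ H⟩ : OrbitCat G Set.univ) ⟶
              (orbitIncl G (Set.subset_univ 𝓐)).obj ⟨K₀, h₁⟩ from
            orbitProj G h₂))) := by
  set S : Set (Subgroup G) := {K : Subgroup G | K ∈ 𝓐 ∧ H ≤ K} with hS
  have hclosed : ∀ x ∈ S, ∀ y ∈ S, x ⊓ y ∈ S := fun x hx y hy =>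
    ⟨h𝓐inf x hx.1 y hy.1, le_inf hx.2 hy.2⟩
  have hmem : K₀ ∈ S := by
    have hfin : S.Finite := Set.toFinite _
    have hne : hfin.toFinset.Nonempty := by
      obtain ⟨K, hK, hHK⟩ := hH
      exact ⟨K, hfin.mem_toFinset.mpr ⟨hK, hHK⟩⟩
    have h := Finset.inf'_mem S hclosed hfin.toFinset hne id
      (fun i hi => hfin.mem_toFinset.mp hi)
    rw [Finset.inf'_eq_inf, Finset.inf_id_eq_sInf, hfin.coe_toFinset] at h
    rwa [hK₀]
  have h₁ : K₀ ∈ 𝓐 := hmem.1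
  have h₂ : H ≤ K₀ := hmem.2
  have hK₀le : ∀ K ∈ S, K₀ ≤ K := fun K hK => hK₀ ▸ sInf_le hK
  refine ⟨h₁, h₂, ?_⟩
  set X := StructuredArrow.mk
      (show (⟨H, Set.mem_univ H⟩ : OrbitCat G Set.univ) ⟶
          (orbitIncl G (Set.subset_univ 𝓐)).obj ⟨K₀, h₁⟩ from orbitProj G h₂) with hX
  have exhom : ∀ Y : StructuredArrow (⟨H, Set.mem_univ H⟩ : OrbitCat G Set.univ)
      (orbitIncl G (Set.subset_univ 𝓐)), Nonempty (X ⟶ Y) := by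
    intro Y
    obtain ⟨a, ha⟩ := Quotient.exists_rep (Y.hom.1 (QuotientGroup.mk 1))
    have ha' : Y.hom.1 (QuotientGroup.mk 1) = QuotientGroup.mk a := ha.symm
    have hconj : K₀ ≤ (Y.right.pt).map (MulAut.conj a).toMonoidHom :=
      hK₀le _ ⟨h𝓐conj _ Y.right.mem a, orbit_le_conj Y.hom a ha'⟩
    refine ⟨StructuredArrow.homMk
      (show (⟨K₀, h₁⟩ : OrbitCat G 𝓐) ⟶ Y.right from transMap a hconj) ?_⟩
    apply Subtype.ext
    funext x
    refine Quotient.inductionOn' x (fun g => ?_)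
    exact (orbit_formula Y.hom a ha' g).symm
  have uniq : ∀ (Y : StructuredArrow (⟨H, Set.mem_univ H⟩ : OrbitCat G Set.univ)
      (orbitIncl G (Set.subset_univ 𝓐))) (m m' : X ⟶ Y), m = m' := by
    intro Y m m'
    apply StructuredArrow.hom_ext
    apply Subtype.ext
    funext x
    refine Quotient.inductionOn' x (fun g => ?_)
    have w := congrFun (congrArg Subtype.val (StructuredArrow.w m)) (QuotientGroup.mk g)
    have w' := congrFun (congrArg Subtype.val (StructuredArrow.w m')) (QuotientGroup.mk g)
    exact w.trans w'.symm
  exact ⟨Limits.IsInitial.ofUniqueHom (fun Y => (exhom Y).some) (fun Y m => uniq Y m _)⟩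
end

section
/- Let G be a finite group and let 𝓐 be a collection of subgroups of G that is closed under conjugation and under intersection of pairs of its members. Let H ≤ G be a subgroup contained in at least one member of 𝓐, and let P denote the set {K ∈ 𝓐 : H ≤ K} partially ordered by inclusion. Then the under category of O_𝓐(G) under G/H (the comma category whose objects are G-maps G/H → G/K with K ∈ 𝓐) is equivalent, as a category, to P viewed as a poset category: every hom-set in the under category has at most one element, each object is isomorphic to one of the canonical projections G/H → G/K with K ∈ P, and there exists a morphism from the projection G/H → G/K to the projection G/H → G/K′ if and only if K ⊆ K′. -/
open CategoryTheory

universe u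

variable (G : Type u) [Group G]

/-- The object of the under category of `O_𝓐(G)` under `G/H` given by the canonical
projection `G/H → G/K`, for `K ∈ 𝓐` with `H ≤ K`. -/
def projObj (𝓐 : Set (Subgroup G)) (H : Subgroup G) {K : Subgroup G}
    (h₁ : K ∈ 𝓐) (h₂ : H ≤ K) :
    StructuredArrow (⟨H, Set.mem_univ H⟩ : OrbitCat G Set.univ)
      (orbitIncl G (Set.subset_univ 𝓐)) :=
  StructuredArrow.mk
    (show (⟨H, Set.mem_univ H⟩ : OrbitCat G Set.univ) ⟶
        (orbitIncl G (Set.subset_univ 𝓐)).obj ⟨K, h₁⟩ from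
      orbitProj G h₂)

/-! A `G`-map `G/K → Y` is determined by the image `y` of any one point `x`, and a `G`-map with
`x ↦ y` exists exactly when `Stab x ≤ Stab y`. Hence the under category of `G/H` is thin, and
sending `f : G/H → G/K` to the stabilizer of `f(1H)` — a conjugate of `K`, so a member of `𝓐`
containing `H` — is fully faithful; it is essentially surjective because the projection
`G/H → G/K` goes to `K`. -/

open MulAction

section CosetMaps

variable {G} {X Y : Type*} [MulAction G X] [MulAction G Y]

theorem eq_of_equivariant_of_apply_eq [IsPretransitive G X] {f f' : X → Y}
    (hf : ∀ (g : G) x, f (g • x) = g • f x) (hf' : ∀ (g : G) x, f' (g • x) = g • f' x)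
    {x : X} (h : f x = f' x) : f = f' := by
  funext y
  obtain ⟨g, rfl⟩ := exists_smul_eq G x y
  rw [hf, hf', h]

theorem stabilizer_le_stabilizer_apply {f : X → Y} (hf : ∀ (g : G) x, f (g • x) = g • f x)
    (x : X) : stabilizer G x ≤ stabilizer G (f x) := fun g hg => by
  rw [mem_stabilizer_iff, ← hf, mem_stabilizer_iff.1 hg]

theorem stabilizer_smul_le_stabilizer_smul {x : X} {y : Y}
    (h : stabilizer G x ≤ stabilizer G y) (g : G) :
    stabilizer G (g • x) ≤ stabilizer G (g • y) := by
  rw [stabilizer_smul_eq_stabilizer_map_conj, stabilizer_smul_eq_stabilizer_map_conj]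
  exact Subgroup.map_mono h

variable {K : Subgroup G}

theorem QuotientGroup.out_inv_smul (x : G ⧸ K) : x.out⁻¹ • x = ((1 : G) : G ⧸ K) := by
  rw [← Quotient.mk_smul_out, smul_eq_mul, inv_mul_cancel]

theorem stabilizer_coset_eq_map_conj (x : G ⧸ K) :
    stabilizer G x = K.map (MulAut.conj x.out).toMonoidHom := by
  conv_lhs => rw [← smul_inv_smul x.out x, QuotientGroup.out_inv_smul]
  rw [stabilizer_smul_eq_stabilizer_map_conj, stabilizer_quotient]

theorem le_stabilizer_out_inv_smul {x : G ⧸ K} {y : Y} (h : stabilizer G x ≤ stabilizer G y) :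
    K ≤ stabilizer G (x.out⁻¹ • y) := by
  simpa [QuotientGroup.out_inv_smul] using stabilizer_smul_le_stabilizer_smul h x.out⁻¹

/-- For `x = aK`, the `G`-map `G/K → Y`, `gK ↦ g a⁻¹ • y`. -/
noncomputable def cosetMapOfStabilizerLE {x : G ⧸ K} {y : Y}
    (h : stabilizer G x ≤ stabilizer G y) : G ⧸ K → Y :=
  ofQuotientStabilizer G (x.out⁻¹ • y) ∘ Subgroup.quotientMapOfLE (le_stabilizer_out_inv_smul h)

theorem cosetMapOfStabilizerLE_smul {x : G ⧸ K} {y : Y} (h : stabilizer G x ≤ stabilizer G y)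
    (g : G) (z : G ⧸ K) :
    cosetMapOfStabilizerLE h (g • z) = g • cosetMapOfStabilizerLE h z :=
  Quotient.inductionOn' z fun _ => mul_smul _ _ _

theorem cosetMapOfStabilizerLE_apply {x : G ⧸ K} {y : Y} (h : stabilizer G x ≤ stabilizer G y) :
    cosetMapOfStabilizerLE h x = y := by
  have : cosetMapOfStabilizerLE h (x.out : G ⧸ K) = (x.out * x.out⁻¹) • y := (mul_smul _ _ _).symm
  rwa [QuotientGroup.out_eq', mul_inv_cancel, one_smul] at this

end CosetMaps

variable {G} in
abbrev UnderOrbit (𝓐 : Set (Subgroup G)) (H : Subgroup G) :=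
  StructuredArrow (⟨H, Set.mem_univ H⟩ : OrbitCat G Set.univ) (orbitIncl G (Set.subset_univ 𝓐))

namespace UnderOrbit

variable {G} {𝓐 : Set (Subgroup G)} {H : Subgroup G}

def basepoint (A : UnderOrbit 𝓐 H) : G ⧸ A.right.pt :=
  A.hom.1 ((1 : G) : G ⧸ H)

def stab (A : UnderOrbit 𝓐 H) : Subgroup G :=
  stabilizer G A.basepoint

theorem stab_mem (h𝓐conj : ∀ K ∈ 𝓐, ∀ g : G, K.map (MulAut.conj g).toMonoidHom ∈ 𝓐)
    (A : UnderOrbit 𝓐 H) : A.stab ∈ 𝓐 := by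
  rw [stab, stabilizer_coset_eq_map_conj]
  exact h𝓐conj _ A.right.mem _

theorem le_stab (A : UnderOrbit 𝓐 H) : H ≤ A.stab :=
  (stabilizer_quotient H).ge.trans (stabilizer_le_stabilizer_apply A.hom.2 _)

theorem stab_projObj {K : Subgroup G} (h₁ : K ∈ 𝓐) (h₂ : H ≤ K) :
    stab (projObj G 𝓐 H h₁ h₂) = K :=
  stabilizer_quotient K

theorem right_map_basepoint {A B : UnderOrbit 𝓐 H} (u : A ⟶ B) :
    u.right.1 A.basepoint = B.basepoint :=
  congrFun (congrArg Subtype.val u.w) _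

instance (A B : UnderOrbit 𝓐 H) : Subsingleton (A ⟶ B) where
  allEq u v := StructuredArrow.hom_ext _ _ <| Subtype.ext <|
    eq_of_equivariant_of_apply_eq u.right.2 v.right.2
      ((right_map_basepoint u).trans (right_map_basepoint v).symm)

noncomputable def homOfStabLE {A B : UnderOrbit 𝓐 H} (h : A.stab ≤ B.stab) : A ⟶ B :=
  StructuredArrow.homMk ⟨cosetMapOfStabilizerLE h, cosetMapOfStabilizerLE_smul h⟩ <|
    Subtype.ext <| eq_of_equivariant_of_apply_eq (x := ((1 : G) : G ⧸ H))
      (A.hom ≫ _).2 B.hom.2 (cosetMapOfStabilizerLE_apply h)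

theorem nonempty_hom_iff {A B : UnderOrbit 𝓐 H} : Nonempty (A ⟶ B) ↔ A.stab ≤ B.stab :=
  ⟨fun ⟨u⟩ => (stabilizer_le_stabilizer_apply u.right.2 A.basepoint).trans_eq
      (congrArg (stabilizer G) (right_map_basepoint u)),
    fun h => ⟨homOfStabLE h⟩⟩

variable (𝓐 H) in
def toSubgroup (h𝓐conj : ∀ K ∈ 𝓐, ∀ g : G, K.map (MulAut.conj g).toMonoidHom ∈ 𝓐) :
    UnderOrbit 𝓐 H ⥤ {K : Subgroup G // K ∈ 𝓐 ∧ H ≤ K} where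
  obj A := ⟨A.stab, A.stab_mem h𝓐conj, A.le_stab⟩
  map u := homOfLE (nonempty_hom_iff.1 ⟨u⟩)

variable (h𝓐conj : ∀ K ∈ 𝓐, ∀ g : G, K.map (MulAut.conj g).toMonoidHom ∈ 𝓐)

instance : (toSubgroup 𝓐 H h𝓐conj).Faithful := ⟨fun _ => Subsingleton.elim _ _⟩

instance : (toSubgroup 𝓐 H h𝓐conj).Full := ⟨fun u => ⟨homOfStabLE (leOfHom u), rfl⟩⟩

instance : (toSubgroup 𝓐 H h𝓐conj).EssSurj :=
  ⟨fun K => ⟨projObj G 𝓐 H K.2.1 K.2.2, ⟨eqToIso (Subtype.ext (stab_projObj K.2.1 K.2.2))⟩⟩⟩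

instance : (toSubgroup 𝓐 H h𝓐conj).IsEquivalence where

end UnderOrbit

open UnderOrbit in
theorem underCategory_equiv_poset_general {G : Type u} [Group G]
    (𝓐 : Set (Subgroup G))
    (h𝓐conj : ∀ K ∈ 𝓐, ∀ g : G, K.map (MulAut.conj g).toMonoidHom ∈ 𝓐)
    (H : Subgroup G) :
    Nonempty
        (StructuredArrow (⟨H, Set.mem_univ H⟩ : OrbitCat G Set.univ)
            (orbitIncl G (Set.subset_univ 𝓐)) ≌
          {K : Subgroup G // K ∈ 𝓐 ∧ H ≤ K}) ∧
    (∀ A B : StructuredArrow (⟨H, Set.mem_univ H⟩ : OrbitCat G Set.univ)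
        (orbitIncl G (Set.subset_univ 𝓐)), Subsingleton (A ⟶ B)) ∧
    (∀ A : StructuredArrow (⟨H, Set.mem_univ H⟩ : OrbitCat G Set.univ)
        (orbitIncl G (Set.subset_univ 𝓐)),
      ∃ (K : Subgroup G) (h₁ : K ∈ 𝓐) (h₂ : H ≤ K),
        Nonempty (A ≅ projObj G 𝓐 H h₁ h₂)) ∧
    (∀ (K K' : Subgroup G) (h₁ : K ∈ 𝓐) (h₁' : K' ∈ 𝓐) (h₂ : H ≤ K) (h₂' : H ≤ K'),
      Nonempty (projObj G 𝓐 H h₁ h₂ ⟶ projObj G 𝓐 H h₁' h₂') ↔ K ≤ K') := by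
  refine ⟨⟨(toSubgroup 𝓐 H h𝓐conj).asEquivalence⟩, inferInstance, fun A => ?_,
    fun K K' h₁ h₁' h₂ h₂' => ?_⟩
  · have hA : stab A = stab (projObj G 𝓐 H (stab_mem h𝓐conj A) (le_stab A)) :=
      (stab_projObj _ _).symm
    exact ⟨_, _, _, ⟨iso_of_both_ways (homOfStabLE hA.le) (homOfStabLE hA.ge)⟩⟩
  · rw [nonempty_hom_iff, stab_projObj, stab_projObj]

/-- **Structural claim in the proof of Proposition `furthercofinalcollection`
(Section 5.5).**  Let `G` be a finite group and `𝓐` a collection of subgroups of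
`G` closed under conjugation and under pairwise intersection, and let `H ≤ G` be
contained in at least one member of `𝓐`.  Then the under category of `O_𝓐(G)`
under `G/H` is equivalent, as a category, to the poset `P = {K ∈ 𝓐 | H ≤ K}`
(ordered by inclusion): every hom-set of the under category has at most one
element, every object is isomorphic to a canonical projection `G/H → G/K` with
`K ∈ P`, and there is a morphism from the projection `G/H → G/K` to the
projection `G/H → G/K'` if and only if `K ⊆ K'`. -/
theorem underCategory_equiv_poset {G : Type u} [Group G] [Finite G]
    (𝓐 : Set (Subgroup G))
    (h𝓐conj : ∀ K ∈ 𝓐, ∀ g : G, K.map (MulAut.conj g).toMonoidHom ∈ 𝓐)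
    (h𝓐inf : ∀ K ∈ 𝓐, ∀ K' ∈ 𝓐, K ⊓ K' ∈ 𝓐)
    (H : Subgroup G) (hH : ∃ K ∈ 𝓐, H ≤ K) :
    Nonempty
        (StructuredArrow (⟨H, Set.mem_univ H⟩ : OrbitCat G Set.univ)
            (orbitIncl G (Set.subset_univ 𝓐)) ≌
          {K : Subgroup G // K ∈ 𝓐 ∧ H ≤ K}) ∧
    (∀ A B : StructuredArrow (⟨H, Set.mem_univ H⟩ : OrbitCat G Set.univ)
        (orbitIncl G (Set.subset_univ 𝓐)), Subsingleton (A ⟶ B)) ∧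
    (∀ A : StructuredArrow (⟨H, Set.mem_univ H⟩ : OrbitCat G Set.univ)
        (orbitIncl G (Set.subset_univ 𝓐)),
      ∃ (K : Subgroup G) (h₁ : K ∈ 𝓐) (h₂ : H ≤ K),
        Nonempty (A ≅ projObj G 𝓐 H h₁ h₂)) ∧
    (∀ (K K' : Subgroup G) (h₁ : K ∈ 𝓐) (h₁' : K' ∈ 𝓐) (h₂ : H ≤ K) (h₂' : H ≤ K'),
      Nonempty (projObj G 𝓐 H h₁ h₂ ⟶ projObj G 𝓐 H h₁' h₂') ↔ K ≤ K') :=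
  underCategory_equiv_poset_general 𝓐 h𝓐conj H
end
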